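/- For the Landweber bias function r_k(λ) = (1-Δt·λ)^k with Δt > 0, 0 < λ ≤ 1/Δt, and any d > 0, the bound (1-Δt·λ)^k · λ^d ≤ (1/Δt)^d · (d/(d+k))^d holds for every positive integer k. -/

import Mathlib

/-!
Put `x = Δt·λ ∈ [0, 1]`, so that `λ^d = (1/Δt)^d · x^d`. With `s = d + k`, weighted AM–GM with
weights `k/s, d/s` applied to `(1-x)·s/k` and `x·s/d` gives a geometric mean at most
`(1 - x) + x = 1`; raising to the power `s`, this says that `(1-x)^k x^d` is at most its value
`(k/s)^k (d/s)^d` at the maximiser `x = d/s`, and `(k/s)^k ≤ 1`.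
-/

namespace Real

lemma one_sub_rpow_mul_rpow_le {x k d : ℝ} (hx₀ : 0 ≤ x) (hx₁ : x ≤ 1) (hk : 0 < k) (hd : 0 < d) :
    (1 - x) ^ k * x ^ d ≤ (k / (d + k)) ^ k * (d / (d + k)) ^ d := by
  have hs : 0 < d + k := by linarith
  set a := k / (d + k)
  set b := d / (d + k)
  have ha : 0 < a := by positivity
  have hb : 0 < b := by positivity
  have hx₁' : 0 ≤ 1 - x := by linarith
  have h_amgm : ((1 - x) / a) ^ a * (x / b) ^ b ≤ 1 := by
    calc ((1 - x) / a) ^ a * (x / b) ^ b ≤ a * ((1 - x) / a) + b * (x / b) :=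
          geom_mean_le_arith_mean2_weighted ha.le hb.le (by positivity) (by positivity)
            (by rw [← add_div, add_comm, div_self hs.ne'])
      _ = 1 := by rw [mul_div_cancel₀ _ ha.ne', mul_div_cancel₀ _ hb.ne', sub_add_cancel]
  have h_pow : ((1 - x) / a) ^ k * (x / b) ^ d ≤ 1 := by
    have := rpow_le_one (by positivity) h_amgm hs.le
    rwa [mul_rpow (by positivity) (by positivity), ← rpow_mul (by positivity),
      ← rpow_mul (by positivity), div_mul_cancel₀ _ hs.ne', div_mul_cancel₀ _ hs.ne'] at this
  rwa [div_rpow hx₁' ha.le, div_rpow hx₀ hb.le, div_mul_div_comm,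
    div_le_one (by positivity)] at h_pow

lemma one_sub_rpow_mul_rpow_le_div_add_rpow {x k d : ℝ} (hx₀ : 0 ≤ x) (hx₁ : x ≤ 1) (hk : 0 < k)
    (hd : 0 < d) : (1 - x) ^ k * x ^ d ≤ (d / (d + k)) ^ d := by
  have hs : 0 < d + k := by linarith
  have h_le_one : (k / (d + k)) ^ k ≤ 1 :=
    rpow_le_one (by positivity) ((div_le_one hs).2 (by linarith)) hk.le
  calc (1 - x) ^ k * x ^ d ≤ (k / (d + k)) ^ k * (d / (d + k)) ^ d :=
        one_sub_rpow_mul_rpow_le hx₀ hx₁ hk hd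
    _ ≤ (d / (d + k)) ^ d := mul_le_of_le_one_left (by positivity) h_le_one

end Real

/-- Landweber qualification bound: (1-Δt·λ)^k·λ^d ≤ (1/Δt)^d·(d/(d+k))^d. -/
theorem landweber_qualification (Δt lam d : ℝ) (k : ℕ)
    (hΔt : 0 < Δt) (hlam : 0 < lam) (hlam' : lam ≤ 1 / Δt) (hd : 0 < d) (hk : 1 ≤ k) :
    (1 - Δt * lam) ^ k * lam ^ d ≤ (1 / Δt) ^ d * (d / (d + k)) ^ d := by
  have hx₀ : 0 ≤ Δt * lam := by positivity
  have hx₁ : Δt * lam ≤ 1 := by rwa [le_div_iff₀ hΔt, mul_comm] at hlam'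
  have h_lam : lam ^ d = (1 / Δt) ^ d * (Δt * lam) ^ d := by
    rw [← Real.mul_rpow (by positivity) hx₀]
    field_simp
  have h_key := Real.one_sub_rpow_mul_rpow_le_div_add_rpow hx₀ hx₁ (Nat.cast_pos.2 hk) hd
  rw [Real.rpow_natCast] at h_key
  calc (1 - Δt * lam) ^ k * lam ^ d
      = (1 / Δt) ^ d * ((1 - Δt * lam) ^ k * (Δt * lam) ^ d) := by rw [h_lam]; ring
    _ ≤ (1 / Δt) ^ d * (d / (d + k)) ^ d := by gcongr
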